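/- Assume conditions (C1)–(C3) hold (with f̄_n ≠ 1 for all n), and let A : ℕ → ℕ be nondecreasing with A(n) → ∞ and n · f̄_{0,A(n)} → 1. Then for all reals 0 < ε ≤ m: lim_{n→∞} f̄_{0,A(⌊nm⌋)} / (1 − f_{0,A(⌊nε⌋)}(0)) = ((2+ν)/2) · (ε/m). Equivalently, the conditional expectation E[X_{A(⌊nm⌋)} | X_{A(⌊nε⌋)} > 0] converges to ((2+ν)/2)(ε/m). -/

import Mathlib

open Filter Finset

structure PGF where
  p : ℕ → ℝ
  nonneg : ∀ k, 0 ≤ p k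
  hasSum_one : HasSum p 1

noncomputable def PGF.eval (f : PGF) (s : ℝ) : ℝ := ∑' k, f.p k * s ^ k

noncomputable def PGF.mean (f : PGF) : ℝ := ∑' k : ℕ, (k : ℝ) * f.p k

noncomputable def PGF.m2 (f : PGF) : ℝ := ∑' k : ℕ, (k : ℝ) * ((k : ℝ) - 1) * f.p k

noncomputable def PGF.m3 (f : PGF) : ℝ := ∑' k : ℕ, (k : ℝ) * ((k : ℝ) - 1) * ((k : ℝ) - 2) * f.p k

/-- `iterComp f j n s` is `f_{j,n}(s) = f_{j+1}(f_{j+2}(⋯ f_n(s)))`, with `f_{n,n}(s) = s`. -/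
noncomputable def iterComp (f : ℕ → PGF) (j n : ℕ) (s : ℝ) : ℝ :=
  (List.range' (j+1) (n-j)).foldr (fun k t => (f k).eval t) s

open Topology

/-!
Kersting's identity writes `f̄_{0,n} / (1 - f_{0,n}(0))` as
`1 + ∑_{k ≤ n} f̄_k f̄_{k,n} φ_k(f_{k,n}(0))`, where `φ_g(t) = 1 / (1 - g(t)) - 1 / (g'(1) (1 - t))`.
Taylor bounds on `1 - t^k` squeeze `φ_k` between two quantities asymptotic to `(ν/2)(1 - f̄_k)`,
uniformly in `t`. The weights `f̄_{k,n} (1 - f̄_k)` telescope to `1 - f̄_{0,n} → 1` and each of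
them tends to `0`, so a Toeplitz-type argument gives `f̄_{0,n} / (1 - f_{0,n}(0)) → 1 + ν/2`.
Evaluating at `A(⌊nε⌋)` and comparing `f̄_{0,A(⌊nm⌋)}` with `f̄_{0,A(⌊nε⌋)}` through
`n f̄_{0,A(n)} → 1` produces the factor `ε / m`.
-/

lemma one_sub_pow_bounds {t : ℝ} (ht0 : 0 ≤ t) (ht1 : t ≤ 1) (k : ℕ) :
    k * (1 - t) - k * (k - 1) / 2 * (1 - t) ^ 2 ≤ 1 - t ^ k ∧
    1 - t ^ k ≤ k * (1 - t) ∧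
    1 - t ^ k ≤ k * (1 - t) - k * (k - 1) / 2 * (1 - t) ^ 2
      + k * (k - 1) * (k - 2) / 6 * (1 - t) ^ 3 := by
  induction k with
  | zero => norm_num
  | succ k ih =>
    obtain ⟨h1, h2, h3⟩ := ih
    have htk1 : t ^ k ≤ 1 := pow_le_one₀ ht0 ht1
    have hu0 : 0 ≤ 1 - t := by linarith
    have hx0 := mul_nonneg hu0 (sub_nonneg.2 htk1)
    have hx1 := mul_le_mul_of_nonneg_left h1 hu0
    have hx2 := mul_le_mul_of_nonneg_left h2 hu0
    have hrec : 1 - t ^ (k + 1) = (1 - t) + (1 - t ^ k) - (1 - t) * (1 - t ^ k) := by ring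
    push_cast
    refine ⟨?_, ?_, ?_⟩ <;> linarith

namespace PGF

variable (g : PGF) {t : ℝ}

lemma m2_nonneg : 0 ≤ g.m2 :=
  tsum_nonneg fun k => by
    rcases k with _ | k
    · simp
    · exact mul_nonneg (by push_cast; ring_nf; positivity) (g.nonneg _)

lemma m3_nonneg : 0 ≤ g.m3 :=
  tsum_nonneg fun k => by
    rcases k with _ | _ | k
    · simp
    · simp
    · exact mul_nonneg (by push_cast; ring_nf; positivity) (g.nonneg _)

lemma p_zero_lt_one (hmean : 0 < g.mean) : g.p 0 < 1 := by
  obtain ⟨k, hk⟩ : ∃ k : ℕ, 0 < (k : ℝ) * g.p k := by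
    by_contra! h
    exact hmean.not_ge (tsum_nonpos h)
  have hk0 : k ≠ 0 := by rintro rfl; simp at hk
  have hsum := sum_le_hasSum {0, k} (fun i _ => g.nonneg i) g.hasSum_one
  rw [sum_pair hk0.symm] at hsum
  linarith [pos_of_mul_pos_right hk (Nat.cast_nonneg k)]

lemma hasSum_one_sub_eval (ht0 : 0 ≤ t) (ht1 : t ≤ 1) :
    HasSum (fun k => g.p k * (1 - t ^ k)) (1 - g.eval t) := by
  have hs : Summable fun k => g.p k * t ^ k :=
    .of_nonneg_of_le (fun k => mul_nonneg (g.nonneg k) (pow_nonneg ht0 k))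
      (fun k => mul_le_of_le_one_right (g.nonneg k) (pow_le_one₀ ht0 ht1)) g.hasSum_one.summable
  simpa [mul_sub, PGF.eval] using g.hasSum_one.sub hs.hasSum

lemma eval_nonneg (ht0 : 0 ≤ t) : 0 ≤ g.eval t :=
  tsum_nonneg fun k => mul_nonneg (g.nonneg k) (pow_nonneg ht0 k)

lemma one_sub_eval_le_mean_mul (ht0 : 0 ≤ t) (ht1 : t ≤ 1)
    (hm1 : Summable fun k : ℕ => (k : ℝ) * g.p k) :
    1 - g.eval t ≤ g.mean * (1 - t) :=
  hasSum_le (fun k => by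
      nlinarith [mul_le_mul_of_nonneg_left (one_sub_pow_bounds ht0 ht1 k).2.1 (g.nonneg k)])
    (g.hasSum_one_sub_eval ht0 ht1) (hm1.hasSum.mul_right (1 - t))

lemma mean_mul_sub_le_one_sub_eval (ht0 : 0 ≤ t) (ht1 : t ≤ 1)
    (hm1 : Summable fun k : ℕ => (k : ℝ) * g.p k)
    (hm2 : Summable fun k : ℕ => (k : ℝ) * ((k : ℝ) - 1) * g.p k) :
    g.mean * (1 - t) - g.m2 / 2 * (1 - t) ^ 2 ≤ 1 - g.eval t := by
  have h := hasSum_le (fun k => by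
      nlinarith [mul_le_mul_of_nonneg_left (one_sub_pow_bounds ht0 ht1 k).1 (g.nonneg k)])
    ((hm1.hasSum.mul_right (1 - t)).sub (hm2.hasSum.mul_right ((1 - t) ^ 2 / 2)))
    (g.hasSum_one_sub_eval ht0 ht1)
  rw [← PGF.mean, ← PGF.m2] at h
  linarith

lemma one_sub_eval_le_mean_mul_sub_add (ht0 : 0 ≤ t) (ht1 : t ≤ 1)
    (hm1 : Summable fun k : ℕ => (k : ℝ) * g.p k)
    (hm2 : Summable fun k : ℕ => (k : ℝ) * ((k : ℝ) - 1) * g.p k)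
    (hm3 : Summable fun k : ℕ => (k : ℝ) * ((k : ℝ) - 1) * ((k : ℝ) - 2) * g.p k) :
    1 - g.eval t ≤ g.mean * (1 - t) - g.m2 / 2 * (1 - t) ^ 2 + g.m3 / 6 * (1 - t) ^ 3 := by
  have h := hasSum_le (fun k => by
      nlinarith [mul_le_mul_of_nonneg_left (one_sub_pow_bounds ht0 ht1 k).2.2 (g.nonneg k)])
    (g.hasSum_one_sub_eval ht0 ht1)
    (((hm1.hasSum.mul_right (1 - t)).sub (hm2.hasSum.mul_right ((1 - t) ^ 2 / 2))).add
      (hm3.hasSum.mul_right ((1 - t) ^ 3 / 6)))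
  rw [← PGF.mean, ← PGF.m2, ← PGF.m3] at h
  linarith

lemma one_sub_p_zero_mul_le_one_sub_eval (ht0 : 0 ≤ t) (ht1 : t ≤ 1) :
    (1 - g.p 0) * (1 - t) ≤ 1 - g.eval t := by
  refine hasSum_le (fun k => ?_) ((g.hasSum_one.sub (hasSum_ite_eq 0 (g.p 0))).mul_right (1 - t))
    (g.hasSum_one_sub_eval ht0 ht1)
  rcases k with _ | k
  · simp
  · have : t ^ (k + 1) ≤ t := pow_le_of_le_one ht0 ht1 k.succ_ne_zero
    simpa using mul_le_mul_of_nonneg_left (by linarith) (g.nonneg (k + 1))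

lemma one_sub_eval_pos (hmean : 0 < g.mean) (ht0 : 0 ≤ t) (ht1 : t < 1) : 0 < 1 - g.eval t :=
  (mul_pos (sub_pos.2 (g.p_zero_lt_one hmean)) (sub_pos.2 ht1)).trans_le
    (g.one_sub_p_zero_mul_le_one_sub_eval ht0 ht1.le)

/-- Kersting's `φ_g(t)`. -/
noncomputable def phi (t : ℝ) : ℝ := 1 / (1 - g.eval t) - 1 / (g.mean * (1 - t))

lemma phi_eq_div (hmean : 0 < g.mean) (ht0 : 0 ≤ t) (ht1 : t < 1) :
    g.phi t = (g.mean * (1 - t) - (1 - g.eval t)) / ((1 - g.eval t) * (g.mean * (1 - t))) := by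
  have := g.one_sub_eval_pos hmean ht0 ht1
  have : 0 < 1 - t := sub_pos.2 ht1
  rw [phi, div_sub_div _ _ (by positivity) (by positivity)]
  ring

lemma phi_nonneg (hmean : 0 < g.mean) (ht0 : 0 ≤ t) (ht1 : t < 1)
    (hm1 : Summable fun k : ℕ => (k : ℝ) * g.p k) : 0 ≤ g.phi t := by
  rw [g.phi_eq_div hmean ht0 ht1]
  have := g.one_sub_eval_pos hmean ht0 ht1
  have : 0 < 1 - t := sub_pos.2 ht1
  exact div_nonneg (sub_nonneg.2 (g.one_sub_eval_le_mean_mul ht0 ht1.le hm1)) (by positivity)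

lemma phi_le_of_mul_le_one_sub_eval {b : ℝ} (hmean : 0 < g.mean) (ht0 : 0 ≤ t) (ht1 : t < 1)
    (hm1 : Summable fun k : ℕ => (k : ℝ) * g.p k)
    (hm2 : Summable fun k : ℕ => (k : ℝ) * ((k : ℝ) - 1) * g.p k)
    (hb : 0 < b) (hD : b * (1 - t) ≤ 1 - g.eval t) :
    g.phi t ≤ g.m2 / 2 / (b * g.mean) := by
  have hu : 0 < 1 - t := sub_pos.2 ht1
  have := g.m2_nonneg
  calc g.phi t
      ≤ g.m2 / 2 * (1 - t) ^ 2 / ((b * (1 - t)) * (g.mean * (1 - t))) := by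
        rw [g.phi_eq_div hmean ht0 ht1]
        gcongr
        linarith [g.mean_mul_sub_le_one_sub_eval ht0 ht1.le hm1 hm2]
    _ = g.m2 / 2 / (b * g.mean) := by field_simp

lemma le_phi (hmean : 0 < g.mean) (ht0 : 0 ≤ t) (ht1 : t < 1)
    (hm1 : Summable fun k : ℕ => (k : ℝ) * g.p k)
    (hm2 : Summable fun k : ℕ => (k : ℝ) * ((k : ℝ) - 1) * g.p k)
    (hm3 : Summable fun k : ℕ => (k : ℝ) * ((k : ℝ) - 1) * ((k : ℝ) - 2) * g.p k) :
    (g.m2 / 2 - g.m3 / 6) / g.mean ^ 2 ≤ g.phi t := by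
  rcases le_or_gt (g.m2 / 2 - g.m3 / 6) 0 with hx | hx
  · exact (div_nonpos_of_nonpos_of_nonneg hx (sq_nonneg _)).trans (g.phi_nonneg hmean ht0 ht1 hm1)
  have hu : 0 < 1 - t := sub_pos.2 ht1
  have hD := g.one_sub_eval_pos hmean ht0 ht1
  have hN : (g.m2 / 2 - g.m3 / 6) * (1 - t) ^ 2 ≤ g.mean * (1 - t) - (1 - g.eval t) := by
    have := g.one_sub_eval_le_mean_mul_sub_add ht0 ht1.le hm1 hm2 hm3
    nlinarith [mul_nonneg g.m3_nonneg (mul_nonneg (sq_nonneg (1 - t)) ht0)]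
  calc (g.m2 / 2 - g.m3 / 6) / g.mean ^ 2
      = (g.m2 / 2 - g.m3 / 6) * (1 - t) ^ 2 / ((g.mean * (1 - t)) * (g.mean * (1 - t))) := by
        field_simp
    _ ≤ g.phi t := by
        rw [g.phi_eq_div hmean ht0 ht1]
        have := g.one_sub_eval_le_mean_mul ht0 ht1.le hm1
        gcongr

-- The first branch is the bound that is sharp as `m2 → 0`; the second holds for every `g`.
noncomputable def phiUpper : ℝ :=
  if g.m2 / 2 < g.mean then g.m2 / 2 / ((g.mean - g.m2 / 2) * g.mean)
  else g.m2 / 2 / ((1 - g.p 0) * g.mean)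

lemma phiUpper_eq (h : g.m2 / 2 < g.mean) :
    g.phiUpper = g.m2 / 2 / ((g.mean - g.m2 / 2) * g.mean) :=
  if_pos h

noncomputable def phiLower : ℝ := max ((g.m2 / 2 - g.m3 / 6) / g.mean ^ 2) 0

lemma phi_le_phiUpper (hmean : 0 < g.mean) (ht0 : 0 ≤ t) (ht1 : t < 1)
    (hm1 : Summable fun k : ℕ => (k : ℝ) * g.p k)
    (hm2 : Summable fun k : ℕ => (k : ℝ) * ((k : ℝ) - 1) * g.p k) :
    g.phi t ≤ g.phiUpper := by
  unfold phiUpper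
  split_ifs with h
  · refine g.phi_le_of_mul_le_one_sub_eval hmean ht0 ht1 hm1 hm2 (by linarith) ?_
    -- `(1 - t) ^ 2 ≤ 1 - t` turns the second-order bound into a linear one
    have := g.mean_mul_sub_le_one_sub_eval ht0 ht1.le hm1 hm2
    nlinarith [mul_nonneg g.m2_nonneg (mul_nonneg (sub_nonneg.2 ht1.le) ht0)]
  · exact g.phi_le_of_mul_le_one_sub_eval hmean ht0 ht1 hm1 hm2
      (sub_pos.2 (g.p_zero_lt_one hmean)) (g.one_sub_p_zero_mul_le_one_sub_eval ht0 ht1.le)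

lemma phiLower_le_phi (hmean : 0 < g.mean) (ht0 : 0 ≤ t) (ht1 : t < 1)
    (hm1 : Summable fun k : ℕ => (k : ℝ) * g.p k)
    (hm2 : Summable fun k : ℕ => (k : ℝ) * ((k : ℝ) - 1) * g.p k)
    (hm3 : Summable fun k : ℕ => (k : ℝ) * ((k : ℝ) - 1) * ((k : ℝ) - 2) * g.p k) :
    g.phiLower ≤ g.phi t :=
  max_le (g.le_phi hmean ht0 ht1 hm1 hm2 hm3) (g.phi_nonneg hmean ht0 ht1 hm1)

lemma phiUpper_mem_Icc (hm2 : g.m2 < 1 / 2) (hmean : 1 / 2 < g.mean) :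
    g.phiUpper ∈ Set.Icc 0 (4 * g.m2) := by
  have := g.m2_nonneg
  rw [g.phiUpper_eq (by linarith)]
  refine ⟨by apply div_nonneg <;> nlinarith, ?_⟩
  have hD : 1 / 8 ≤ (g.mean - g.m2 / 2) * g.mean := by nlinarith
  rw [div_le_iff₀ (by linarith)]
  nlinarith

lemma phiLower_mem_Icc (hmean : 1 / 2 < g.mean) : g.phiLower ∈ Set.Icc 0 (2 * g.m2) := by
  have := g.m2_nonneg
  have := g.m3_nonneg
  refine ⟨le_max_right _ _, max_le ?_ (by positivity)⟩
  have hsq : 1 / 4 ≤ g.mean ^ 2 := by nlinarith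
  rw [div_le_iff₀ (by positivity)]
  nlinarith

end PGF

/-- For the means `a i = f̄_i` this is the paper's `f̄_{k,n}`. -/
def prodIoc (a : ℕ → ℝ) (k n : ℕ) : ℝ := ∏ i ∈ Ioc k n, a i

lemma prodIoc_eq_mul_prodIoc (a : ℕ → ℝ) {k n : ℕ} (h : k < n) :
    prodIoc a k n = a (k + 1) * prodIoc a (k + 1) n := by
  rw [prodIoc, prodIoc, ← prod_Ioc_consecutive _ k.le_succ h, Nat.Ioc_succ_singleton,
    prod_singleton]

lemma prodIoc_mul_prodIoc (a : ℕ → ℝ) {j k n : ℕ} (hjk : j ≤ k) (hkn : k ≤ n) :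
    prodIoc a j k * prodIoc a k n = prodIoc a j n :=
  prod_Ioc_consecutive _ hjk hkn

lemma prodIoc_pos {a : ℕ → ℝ} (ha : ∀ i, 0 < a i) (k n : ℕ) : 0 < prodIoc a k n :=
  prod_pos fun i _ => ha i

section Composition

variable (f : ℕ → PGF)

lemma iterComp_self (n : ℕ) (s : ℝ) : iterComp f n n s = s := by simp [iterComp]

lemma iterComp_of_lt {j n : ℕ} (h : j < n) (s : ℝ) :
    iterComp f j n s = (f (j + 1)).eval (iterComp f (j + 1) n s) := by
  rw [iterComp, iterComp, show n - j = n - (j + 1) + 1 by omega, List.range'_succ,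
    List.foldr_cons]

lemma iterComp_zero_mem_Ico (hpos : ∀ n, 0 < (f n).mean) {j n : ℕ} (h : j ≤ n) :
    iterComp f j n 0 ∈ Set.Ico 0 1 := by
  induction h using Nat.decreasingInduction with
  | self => simp [iterComp_self]
  | of_succ k hk ih =>
    rw [iterComp_of_lt f hk]
    exact ⟨(f _).eval_nonneg ih.1, sub_pos.1 ((f _).one_sub_eval_pos (hpos _) ih.1 ih.2)⟩

lemma prodIoc_div_one_sub_iterComp (hpos : ∀ n, 0 < (f n).mean) {j n : ℕ} (h : j ≤ n) :
    prodIoc (fun i => (f i).mean) j n / (1 - iterComp f j n 0) =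
      1 + ∑ k ∈ Ioc j n,
        (f k).mean * prodIoc (fun i => (f i).mean) k n * (f k).phi (iterComp f k n 0) := by
  induction h using Nat.decreasingInduction with
  | self => simp [prodIoc, iterComp_self]
  | of_succ k hk ih =>
    obtain ⟨hr0, hr1⟩ := iterComp_zero_mem_Ico f hpos hk
    have hD := (f (k + 1)).one_sub_eval_pos (hpos _) hr0 hr1
    have hr : 0 < 1 - iterComp f (k + 1) n 0 := sub_pos.2 hr1
    have hm := hpos (k + 1)
    rw [← sum_Ioc_consecutive _ k.le_succ hk, Nat.Ioc_succ_singleton, sum_singleton,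
      eq_sub_of_add_eq' ih.symm, prodIoc_eq_mul_prodIoc _ hk, iterComp_of_lt f hk, PGF.phi]
    field_simp
    ring

end Composition

section Toeplitz

variable {a : ℕ → ℝ}

lemma sum_prodIoc_mul_one_sub (a : ℕ → ℝ) (n : ℕ) :
    ∑ k ∈ Ioc 0 n, prodIoc a k n * (1 - a k) = 1 - prodIoc a 0 n := by
  induction n with
  | zero => simp [prodIoc]
  | succ n ih =>
    have hsucc : ∀ k ≤ n, prodIoc a k (n + 1) = prodIoc a k n * a (n + 1) :=
      fun k hk => prod_Ioc_succ_top hk _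
    rw [sum_Ioc_succ_top n.zero_le, hsucc 0 n.zero_le,
      sum_congr rfl fun k hk => by rw [hsucc k (mem_Ioc.1 hk).2, mul_right_comm], ← sum_mul, ih,
      show prodIoc a (n + 1) (n + 1) = 1 by simp [prodIoc]]
    ring

lemma prodIoc_le_exp_sum (ha : ∀ i, 0 ≤ a i) (k n : ℕ) :
    prodIoc a k n ≤ Real.exp (∑ i ∈ Ioc k n, (a i - 1)) := by
  rw [Real.exp_sum]
  exact prod_le_prod (fun i _ => ha i) fun i _ => by linarith [Real.add_one_le_exp (a i - 1)]

lemma prodIoc_le_exp_tsum (ha : ∀ i, 0 ≤ a i) (hsum : Summable fun i => max (a i - 1) 0)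
    (k n : ℕ) : prodIoc a k n ≤ Real.exp (∑' i, max (a i - 1) 0) :=
  (prodIoc_le_exp_sum ha k n).trans <| Real.exp_le_exp.2 <|
    (sum_le_sum fun _ _ => le_max_left _ _).trans (hsum.sum_le_tsum _ fun _ _ => le_max_right _ _)

lemma tendsto_prodIoc_zero_atTop (ha : ∀ i, 0 < a i)
    (hdiv : ¬ Summable fun i => max (1 - a i) 0) (hsum : Summable fun i => max (a i - 1) 0) :
    Tendsto (prodIoc a 0) atTop (𝓝 0) := by
  have hdiv' : Tendsto (fun n => ∑ i ∈ range n, max (1 - a i) 0) atTop atTop :=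
    (not_summable_iff_tendsto_nat_atTop_of_nonneg fun i => le_max_right _ _).1 hdiv
  have hneg : Tendsto (fun n => ∑ i ∈ Ioc 0 n, (a i - 1)) atTop atBot := by
    refine tendsto_atBot_mono (fun n => ?_) <| tendsto_atBot_add_const_left _
      (∑' i, max (a i - 1) 0 + max (1 - a 0) 0) (tendsto_neg_atTop_atBot.comp hdiv')
    have h1 : ∑ i ∈ Ioc 0 n, max (a i - 1) 0 ≤ ∑' i, max (a i - 1) 0 :=
      hsum.sum_le_tsum _ fun _ _ => le_max_right _ _
    have h2 : ∑ i ∈ range n, max (1 - a i) 0 ≤ ∑ i ∈ insert 0 (Ioc 0 n), max (1 - a i) 0 :=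
      sum_le_sum_of_subset_of_nonneg (fun k hk => by simp at hk ⊢; omega)
        fun i _ _ => le_max_right _ _
    rw [sum_insert (by simp)] at h2
    have h3 : ∑ i ∈ Ioc 0 n, (a i - 1) =
        ∑ i ∈ Ioc 0 n, max (a i - 1) 0 - ∑ i ∈ Ioc 0 n, max (1 - a i) 0 := by
      rw [← sum_sub_distrib]
      refine sum_congr rfl fun i _ => ?_
      have := max_zero_sub_eq_self (a i - 1)
      rwa [neg_sub, eq_comm] at this
    simp only [Function.comp_apply]
    linarith
  exact squeeze_zero (fun n => (prodIoc_pos ha 0 n).le)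
    (fun n => prodIoc_le_exp_sum (fun i => (ha i).le) 0 n) (Real.tendsto_exp_atBot.comp hneg)

lemma sum_prodIoc_mul_max_one_sub_le (ha : ∀ i, 0 < a i)
    (hsum : Summable fun i => max (a i - 1) 0) (n : ℕ) :
    ∑ k ∈ Ioc 0 n, prodIoc a k n * max (1 - a k) 0 ≤
      1 + Real.exp (∑' i, max (a i - 1) 0) * ∑' i, max (a i - 1) 0 := by
  have hsplit : ∀ k ∈ Ioc 0 n, prodIoc a k n * max (1 - a k) 0 =
      prodIoc a k n * (1 - a k) + prodIoc a k n * max (a k - 1) 0 := fun k _ => by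
    have := max_zero_sub_eq_self (1 - a k)
    rw [neg_sub] at this
    linear_combination prodIoc a k n * this
  set S := ∑' i, max (a i - 1) 0
  have hexcess : ∑ k ∈ Ioc 0 n, prodIoc a k n * max (a k - 1) 0 ≤ Real.exp S * S :=
    calc ∑ k ∈ Ioc 0 n, prodIoc a k n * max (a k - 1) 0
        ≤ ∑ k ∈ Ioc 0 n, Real.exp S * max (a k - 1) 0 :=
          sum_le_sum fun k _ => mul_le_mul_of_nonneg_right
            (prodIoc_le_exp_tsum (fun i => (ha i).le) hsum k n) (le_max_right _ _)
      _ ≤ Real.exp S * S := by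
          rw [← mul_sum]
          exact mul_le_mul_of_nonneg_left (hsum.sum_le_tsum _ fun _ _ => le_max_right _ _)
            (Real.exp_pos _).le
  rw [sum_congr rfl hsplit, sum_add_distrib, sum_prodIoc_mul_one_sub]
  linarith [prodIoc_pos ha 0 n]

lemma eventually_forall_sum_Ioc_le {g : ℕ → ℝ} (hg : Summable g) (hg0 : ∀ i, 0 ≤ g i)
    {δ : ℝ} (hδ : 0 < δ) : ∀ᶠ K in atTop, ∀ n, ∑ i ∈ Ioc K n, g i ≤ δ := by
  filter_upwards [(hg.hasSum.tendsto_sum_nat.comp (tendsto_add_atTop_nat 1)).eventually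
    (lt_mem_nhds (sub_lt_self _ hδ))] with K hK n
  have hdisj : Disjoint (range (K + 1)) (Ioc K n) :=
    disjoint_left.2 fun i hi hi' => by simp at hi hi'; omega
  have := hg.sum_le_tsum (range (K + 1) ∪ Ioc K n) fun i _ => hg0 i
  rw [sum_union hdisj] at this
  simp only [Function.comp_apply] at hK
  linarith

lemma tendsto_sum_Ioc_prodIoc_mul_zero (ha : ∀ i, 0 < a i)
    (hdiv : ¬ Summable fun i => max (1 - a i) 0) (hsum : Summable fun i => max (a i - 1) 0)
    (x : ℕ → ℝ) (K : ℕ) :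
    Tendsto (fun n => ∑ k ∈ Ioc 0 K, prodIoc a k n * x k) atTop (𝓝 0) := by
  have h := (tendsto_prodIoc_zero_atTop ha hdiv hsum).mul_const
    (∑ k ∈ Ioc 0 K, x k / prodIoc a 0 k)
  rw [zero_mul] at h
  refine h.congr' <| (eventually_ge_atTop K).mono fun n hn => ?_
  rw [mul_sum]
  refine sum_congr rfl fun k hk => ?_
  rw [← prodIoc_mul_prodIoc a k.zero_le ((mem_Ioc.1 hk).2.trans hn)]
  field_simp [(prodIoc_pos ha 0 k).ne']

lemma abs_sum_Ioc_prodIoc_mul_one_sub_mul_le (ha : ∀ i, 0 < a i)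
    (hsum : Summable fun i => max (a i - 1) 0) {d : ℕ → ℝ} {B δ : ℝ} {K : ℕ} (hδ : 0 ≤ δ)
    (hB : ∀ k > K, |d k| ≤ B) (hδd : ∀ k > K, a k < 1 → |d k| ≤ δ) (n : ℕ) :
    |∑ k ∈ Ioc K n, prodIoc a k n * (1 - a k) * d k| ≤
      δ * (1 + Real.exp (∑' i, max (a i - 1) 0) * ∑' i, max (a i - 1) 0) +
        B * Real.exp (∑' i, max (a i - 1) 0) * ∑ k ∈ Ioc K n, max (a k - 1) 0 := by
  set E := Real.exp (∑' i, max (a i - 1) 0)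
  have hterm : ∀ k ∈ Ioc K n, |prodIoc a k n * (1 - a k) * d k| ≤
      δ * (prodIoc a k n * max (1 - a k) 0) + B * E * max (a k - 1) 0 := by
    intro k hk
    have hKk : K < k := (mem_Ioc.1 hk).1
    have hW := prodIoc_pos ha k n
    rw [abs_mul, abs_mul, abs_of_pos hW]
    rcases lt_or_ge (a k) 1 with h | h
    · rw [max_eq_left (by linarith), max_eq_right (by linarith), abs_of_pos (by linarith)]
      nlinarith [mul_le_mul_of_nonneg_left (hδd k hKk h) (mul_pos hW (sub_pos.2 h)).le]
    · rw [max_eq_right (by linarith), max_eq_left (by linarith), abs_of_nonpos (by linarith)]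
      have hWE : prodIoc a k n ≤ E := prodIoc_le_exp_tsum (fun i => (ha i).le) hsum k n
      have hd := hB k hKk
      have h0 : 0 ≤ a k - 1 := by linarith
      nlinarith [mul_le_mul hWE hd (abs_nonneg _) (Real.exp_pos _).le,
        mul_nonneg h0 (abs_nonneg (d k))]
  have hsub : ∑ k ∈ Ioc K n, prodIoc a k n * max (1 - a k) 0 ≤
      ∑ k ∈ Ioc 0 n, prodIoc a k n * max (1 - a k) 0 :=
    sum_le_sum_of_subset_of_nonneg (Ioc_subset_Ioc_left K.zero_le)
      fun k _ _ => mul_nonneg (prodIoc_pos ha k n).le (le_max_right _ _)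
  calc |∑ k ∈ Ioc K n, prodIoc a k n * (1 - a k) * d k|
      ≤ ∑ k ∈ Ioc K n, (δ * (prodIoc a k n * max (1 - a k) 0) + B * E * max (a k - 1) 0) :=
        (abs_sum_le_sum_abs _ _).trans (sum_le_sum hterm)
    _ = δ * ∑ k ∈ Ioc K n, prodIoc a k n * max (1 - a k) 0 +
          B * E * ∑ k ∈ Ioc K n, max (a k - 1) 0 := by
        rw [sum_add_distrib, mul_sum, mul_sum]
    _ ≤ _ := by
        gcongr
        exact hsub.trans (sum_prodIoc_mul_max_one_sub_le ha hsum n)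

lemma tendsto_sum_prodIoc_mul_one_sub_mul_zero (ha : ∀ i, 0 < a i)
    (hdiv : ¬ Summable fun i => max (1 - a i) 0) (hsum : Summable fun i => max (a i - 1) 0)
    {d : ℕ → ℝ} {B : ℝ} (hB : ∀ᶠ k in atTop, |d k| ≤ B)
    (hd : Tendsto d (atTop ⊓ 𝓟 {k | a k < 1}) (𝓝 0)) :
    Tendsto (fun n => ∑ k ∈ Ioc 0 n, prodIoc a k n * (1 - a k) * d k) atTop (𝓝 0) := by
  set S := ∑' i, max (a i - 1) 0
  set E := Real.exp S
  have hM : 0 < 1 + E * S := by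
    have : 0 ≤ S := tsum_nonneg fun _ => le_max_right _ _
    positivity
  obtain ⟨k₀, hk₀⟩ := hB.exists
  have hBE : 0 ≤ B * E := mul_nonneg ((abs_nonneg _).trans hk₀) (Real.exp_pos S).le
  rw [Metric.tendsto_atTop]
  intro η hη
  set δ := η / 3 / (1 + E * S)
  set δ' := η / 3 / (B * E + 1)
  have hδ : 0 < δ := by positivity
  have hδ' : 0 < δ' := by positivity
  have hδd : ∀ᶠ k in atTop, a k < 1 → |d k| ≤ δ := by
    have := hd.eventually (Metric.closedBall_mem_nhds 0 hδ)
    rw [eventually_inf_principal] at this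
    simpa [Real.dist_eq] using this
  obtain ⟨K, hK⟩ := ((hB.and hδd).and
    (eventually_forall_sum_Ioc_le hsum (fun _ => le_max_right _ _) hδ')).exists_forall_of_atTop
  obtain ⟨N, hN⟩ := eventually_atTop.1 <|
    (tendsto_sum_Ioc_prodIoc_mul_zero ha hdiv hsum (fun k => (1 - a k) * d k) K).eventually
      (Metric.ball_mem_nhds 0 (by positivity : 0 < η / 3))
  refine ⟨max N K, fun n hn => ?_⟩
  have hhead := hN n (le_of_max_le_left hn)
  simp only [Real.dist_eq, sub_zero, ← mul_assoc] at hhead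
  have htail := abs_sum_Ioc_prodIoc_mul_one_sub_mul_le ha hsum hδ.le
    (fun k hk => (hK k hk.le).1.1) (fun k hk => (hK k hk.le).1.2) n
  have hexcess := mul_le_mul_of_nonneg_left ((hK K le_rfl).2 n) hBE
  have hδM : δ * (1 + E * S) = η / 3 := div_mul_cancel₀ _ hM.ne'
  have hδ'M : δ' * (B * E + 1) = η / 3 := div_mul_cancel₀ _ (by positivity)
  rw [Real.dist_eq, sub_zero, ← sum_Ioc_consecutive _ K.zero_le (le_of_max_le_right hn)]
  linarith [abs_add_le (∑ k ∈ Ioc 0 K, prodIoc a k n * (1 - a k) * d k)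
    (∑ k ∈ Ioc K n, prodIoc a k n * (1 - a k) * d k)]

lemma tendsto_sum_prodIoc_mul_one_sub_mul (ha : ∀ i, 0 < a i)
    (hdiv : ¬ Summable fun i => max (1 - a i) 0) (hsum : Summable fun i => max (a i - 1) 0)
    {b : ℕ → ℝ} {B L : ℝ} (hB : ∀ᶠ k in atTop, |b k| ≤ B)
    (hb : Tendsto b (atTop ⊓ 𝓟 {k | a k < 1}) (𝓝 L)) :
    Tendsto (fun n => ∑ k ∈ Ioc 0 n, prodIoc a k n * (1 - a k) * b k) atTop (𝓝 L) := by
  have hd := tendsto_sum_prodIoc_mul_one_sub_mul_zero ha hdiv hsum (d := fun k => b k - L)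
    (B := B + |L|)
    (hB.mono fun k hk => (abs_sub _ _).trans (by linarith))
    (by simpa using hb.sub_const L)
  have hP := ((tendsto_prodIoc_zero_atTop ha hdiv hsum).const_sub 1).const_mul L
  rw [sub_zero, mul_one] at hP
  simpa using (hd.add hP).congr fun n => by
    rw [← sum_prodIoc_mul_one_sub, mul_sum, ← sum_add_distrib]
    exact sum_congr rfl fun k _ => by ring

lemma tendsto_sum_mul_prodIoc_mul (ha : ∀ i, 0 < a i) (hne : ∀ i, a i ≠ 1)
    (ha1 : Tendsto a atTop (𝓝 1))
    (hdiv : ¬ Summable fun i => max (1 - a i) 0) (hsum : Summable fun i => max (a i - 1) 0)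
    {c : ℕ → ℝ} {C L : ℝ} (hC : ∀ᶠ k in atTop, |c k| ≤ C * |1 - a k|)
    (hc : Tendsto (fun k => c k / (1 - a k)) (atTop ⊓ 𝓟 {k | a k < 1}) (𝓝 L)) :
    Tendsto (fun n => ∑ k ∈ Ioc 0 n, a k * prodIoc a k n * c k) atTop (𝓝 L) := by
  have hb : ∀ᶠ k in atTop, |a k * (c k / (1 - a k))| ≤ 2 * C := by
    filter_upwards [hC, ha1.eventually (gt_mem_nhds one_lt_two)] with k hk h2
    have hk' : |c k / (1 - a k)| ≤ C := by
      rw [abs_div, div_le_iff₀ (abs_pos.2 (sub_ne_zero.2 (hne k).symm))]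
      exact hk
    rw [abs_mul, abs_of_pos (ha k)]
    nlinarith [ha k, abs_nonneg (c k / (1 - a k))]
  have hlim := tendsto_sum_prodIoc_mul_one_sub_mul ha hdiv hsum hb
    ((ha1.mono_left inf_le_left).mul hc)
  rw [one_mul] at hlim
  refine hlim.congr fun n => sum_congr rfl fun k _ => ?_
  have : 1 - a k ≠ 0 := sub_ne_zero.2 (hne k).symm
  field_simp

end Toeplitz

section Environment

variable {f : ℕ → PGF} {ν : ℝ}

lemma exists_m2_le_mul_abs (hne : ∀ n, (f n).mean ≠ 1)
    (hC2b : ∃ C, ∀ n, (f n).m2 / |1 - (f n).mean| ≤ C) :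
    ∃ C, ∀ n, (f n).m2 ≤ C * |1 - (f n).mean| := by
  obtain ⟨C, hC⟩ := hC2b
  exact ⟨C, fun n => (div_le_iff₀ (abs_pos.2 (sub_ne_zero.2 (hne n).symm))).1 (hC n)⟩

lemma tendsto_m2_zero (hne : ∀ n, (f n).mean ≠ 1)
    (hC1a : Tendsto (fun n => (f n).mean) atTop (𝓝 1))
    (hC2b : ∃ C, ∀ n, (f n).m2 / |1 - (f n).mean| ≤ C) :
    Tendsto (fun n => (f n).m2) atTop (𝓝 0) := by
  obtain ⟨C, hC⟩ := exists_m2_le_mul_abs hne hC2b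
  refine squeeze_zero (fun n => (f n).m2_nonneg) hC ?_
  simpa using ((hC1a.const_sub 1).abs).const_mul C

lemma tendsto_sum_phiUpper (hpos : ∀ n, 0 < (f n).mean) (hne : ∀ n, (f n).mean ≠ 1)
    (hC1a : Tendsto (fun n => (f n).mean) atTop (𝓝 1))
    (hC1b : ¬ Summable (fun n => max (1 - (f n).mean) 0))
    (hC1c : Summable (fun n => max ((f n).mean - 1) 0))
    (hC2a : Tendsto (fun n => (f n).m2 / (1 - (f n).mean))
      (atTop ⊓ 𝓟 {n | (f n).mean < 1}) (𝓝 ν))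
    (hC2b : ∃ C, ∀ n, (f n).m2 / |1 - (f n).mean| ≤ C) :
    Tendsto (fun n => ∑ k ∈ Ioc 0 n,
      (f k).mean * prodIoc (fun i => (f i).mean) k n * (f k).phiUpper) atTop (𝓝 (ν / 2)) := by
  obtain ⟨C, hC⟩ := exists_m2_le_mul_abs hne hC2b
  have hm2 := tendsto_m2_zero hne hC1a hC2b
  have hev : ∀ᶠ k in atTop, (f k).m2 < 1 / 2 ∧ 1 / 2 < (f k).mean :=
    (hm2.eventually (gt_mem_nhds (by norm_num))).and (hC1a.eventually (lt_mem_nhds (by norm_num)))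
  refine tendsto_sum_mul_prodIoc_mul hpos hne hC1a hC1b hC1c (C := 4 * C) ?_ ?_
  · filter_upwards [hev] with k ⟨h1, h2⟩
    obtain ⟨h0, h4⟩ := (f k).phiUpper_mem_Icc h1 h2
    rw [abs_of_nonneg h0]
    linarith [hC k]
  · have hlim := (hC2a.div_const 2).div
      (((hC1a.sub (hm2.div_const 2)).mul hC1a).mono_left inf_le_left) (by norm_num)
    norm_num at hlim
    refine hlim.congr' ?_
    filter_upwards [hev.filter_mono inf_le_left] with k ⟨h1, h2⟩
    simp only [Pi.div_apply]
    rw [(f k).phiUpper_eq (by linarith [(f k).m2_nonneg])]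
    ring

lemma tendsto_sum_phiLower (hpos : ∀ n, 0 < (f n).mean) (hne : ∀ n, (f n).mean ≠ 1)
    (hC1a : Tendsto (fun n => (f n).mean) atTop (𝓝 1))
    (hC1b : ¬ Summable (fun n => max (1 - (f n).mean) 0))
    (hC1c : Summable (fun n => max ((f n).mean - 1) 0))
    (hC2a : Tendsto (fun n => (f n).m2 / (1 - (f n).mean))
      (atTop ⊓ 𝓟 {n | (f n).mean < 1}) (𝓝 ν))
    (hC2b : ∃ C, ∀ n, (f n).m2 / |1 - (f n).mean| ≤ C) (hν : 0 < ν)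
    (hC3a : Tendsto (fun n => (f n).m3 / (1 - (f n).mean))
      (atTop ⊓ 𝓟 {n | (f n).mean < 1}) (𝓝 0)) :
    Tendsto (fun n => ∑ k ∈ Ioc 0 n,
      (f k).mean * prodIoc (fun i => (f i).mean) k n * (f k).phiLower) atTop (𝓝 (ν / 2)) := by
  obtain ⟨C, hC⟩ := exists_m2_le_mul_abs hne hC2b
  have hev : ∀ᶠ k in atTop, 1 / 2 < (f k).mean := hC1a.eventually (lt_mem_nhds (by norm_num))
  refine tendsto_sum_mul_prodIoc_mul hpos hne hC1a hC1b hC1c (C := 2 * C) ?_ ?_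
  · filter_upwards [hev] with k h
    obtain ⟨h0, h2⟩ := (f k).phiLower_mem_Icc h
    rw [abs_of_nonneg h0]
    linarith [hC k]
  · have hlim := (((hC2a.div_const 2).sub (hC3a.div_const 6)).div
      ((hC1a.pow 2).mono_left inf_le_left) (by norm_num)).max (tendsto_const_nhds (x := (0 : ℝ)))
    rw [show max ((ν / 2 - 0 / 6) / 1 ^ 2) 0 = ν / 2 by norm_num; linarith] at hlim
    refine hlim.congr' ?_
    filter_upwards [mem_inf_of_right (mem_principal_self _)] with k (hk : (f k).mean < 1)
    simp only [Pi.div_apply]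
    rw [PGF.phiLower, ← max_div_div_right (sub_pos.2 hk).le, zero_div]
    congr 1
    ring

theorem tendsto_prodIoc_div_one_sub_iterComp (hν : 0 ≤ ν)
    (hmean_sum : ∀ n, Summable (fun k : ℕ => (k : ℝ) * (f n).p k))
    (hm2_sum : ∀ n, Summable (fun k : ℕ => (k : ℝ) * ((k : ℝ) - 1) * (f n).p k))
    (hm3_sum : ∀ n, Summable (fun k : ℕ => (k : ℝ) * ((k : ℝ) - 1) * ((k : ℝ) - 2) * (f n).p k))
    (hpos : ∀ n, 0 < (f n).mean) (hne : ∀ n, (f n).mean ≠ 1)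
    (hC1a : Tendsto (fun n => (f n).mean) atTop (𝓝 1))
    (hC1b : ¬ Summable (fun n => max (1 - (f n).mean) 0))
    (hC1c : Summable (fun n => max ((f n).mean - 1) 0))
    (hC2a : Tendsto (fun n => (f n).m2 / (1 - (f n).mean))
      (atTop ⊓ 𝓟 {n | (f n).mean < 1}) (𝓝 ν))
    (hC2b : ∃ C, ∀ n, (f n).m2 / |1 - (f n).mean| ≤ C)
    (hC3a : 0 < ν → Tendsto (fun n => (f n).m3 / (1 - (f n).mean))
      (atTop ⊓ 𝓟 {n | (f n).mean < 1}) (𝓝 0)) :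
    Tendsto (fun n => prodIoc (fun i => (f i).mean) 0 n / (1 - iterComp f 0 n 0))
      atTop (𝓝 (1 + ν / 2)) := by
  have hw : ∀ n k, 0 ≤ (f k).mean * prodIoc (fun i => (f i).mean) k n :=
    fun n k => (mul_pos (hpos k) (prodIoc_pos hpos k n)).le
  have hmem : ∀ n, ∀ k ∈ Ioc 0 n, iterComp f k n 0 ∈ Set.Ico 0 1 :=
    fun n k hk => iterComp_zero_mem_Ico f hpos (mem_Ioc.1 hk).2
  obtain ⟨l, hl, hl_lim⟩ : ∃ l : ℕ → ℝ,
      (∀ n, ∀ k ∈ Ioc 0 n, l k ≤ (f k).phi (iterComp f k n 0)) ∧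
      Tendsto (fun n => ∑ k ∈ Ioc 0 n,
        (f k).mean * prodIoc (fun i => (f i).mean) k n * l k) atTop (𝓝 (ν / 2)) := by
    rcases hν.eq_or_lt with rfl | hν0
    · exact ⟨0, fun n k hk => (f k).phi_nonneg (hpos k) (hmem n k hk).1 (hmem n k hk).2
        (hmean_sum k), by simp⟩
    · exact ⟨fun k => (f k).phiLower, fun n k hk => (f k).phiLower_le_phi (hpos k)
        (hmem n k hk).1 (hmem n k hk).2 (hmean_sum k) (hm2_sum k) (hm3_sum k),
        tendsto_sum_phiLower hpos hne hC1a hC1b hC1c hC2a hC2b hν0 (hC3a hν0)⟩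
  have hsum := tendsto_of_tendsto_of_tendsto_of_le_of_le hl_lim
    (tendsto_sum_phiUpper hpos hne hC1a hC1b hC1c hC2a hC2b)
    (fun n => sum_le_sum fun k hk => mul_le_mul_of_nonneg_left (hl n k hk) (hw n k))
    (fun n => sum_le_sum fun k hk => mul_le_mul_of_nonneg_left ((f k).phi_le_phiUpper (hpos k)
      (hmem n k hk).1 (hmem n k hk).2 (hmean_sum k) (hm2_sum k)) (hw n k))
  exact (hsum.const_add 1).congr fun n => (prodIoc_div_one_sub_iterComp f hpos n.zero_le).symm

end Environment

lemma tendsto_natFloor_mul_atTop {c : ℝ} (hc : 0 < c) :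
    Tendsto (fun n : ℕ => ⌊(n : ℝ) * c⌋₊) atTop atTop :=
  tendsto_nat_floor_atTop.comp (tendsto_natCast_atTop_atTop.atTop_mul_const hc)

lemma tendsto_natFloor_mul_div_natFloor_mul {ε m : ℝ} (hε : 0 < ε) (hm : 0 < m) :
    Tendsto (fun n : ℕ => (⌊(n : ℝ) * ε⌋₊ : ℝ) / ⌊(n : ℝ) * m⌋₊) atTop (𝓝 (ε / m)) := by
  have hfloor : ∀ {c : ℝ}, 0 < c →
      Tendsto (fun n : ℕ => (⌊(n : ℝ) * c⌋₊ : ℝ) / ((n : ℝ) * c)) atTop (𝓝 1) :=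
    fun hc => tendsto_nat_floor_div_atTop.comp (tendsto_natCast_atTop_atTop.atTop_mul_const hc)
  have h := ((hfloor hε).div (hfloor hm) one_ne_zero).mul_const (ε / m)
  rw [div_one, one_mul] at h
  refine h.congr' ?_
  filter_upwards [eventually_gt_atTop 0, (tendsto_natFloor_mul_atTop hm).eventually_gt_atTop 0]
    with n hn hnm
  have : (0 : ℝ) < n := Nat.cast_pos.2 hn
  have : (0 : ℝ) < ⌊(n : ℝ) * m⌋₊ := Nat.cast_pos.2 hnm
  simp only [Pi.div_apply]
  field_simp

theorem stmt14_general (f : ℕ → PGF) (ν : ℝ) (hν : 0 ≤ ν)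
    (hmean_sum : ∀ n, Summable (fun k : ℕ => (k : ℝ) * (f n).p k))
    (hm2_sum : ∀ n, Summable (fun k : ℕ => (k : ℝ) * ((k : ℝ) - 1) * (f n).p k))
    (hm3_sum : ∀ n, Summable (fun k : ℕ => (k : ℝ) * ((k : ℝ) - 1) * ((k : ℝ) - 2) * (f n).p k))
    (hmean_pos : ∀ n, 0 < (f n).mean) (hmean_ne : ∀ n, (f n).mean ≠ 1)
    (hC1a : Tendsto (fun n => (f n).mean) atTop (nhds 1))
    (hC1b : ¬ Summable (fun n => max (1 - (f n).mean) 0))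
    (hC1c : Summable (fun n => max ((f n).mean - 1) 0))
    (hC2a : Tendsto (fun n => (f n).m2 / (1 - (f n).mean))
      (atTop ⊓ 𝓟 {n | (f n).mean < 1}) (nhds ν))
    (hC2b : ∃ C, ∀ n, (f n).m2 / |1 - (f n).mean| ≤ C)
    (hC3a : 0 < ν → Tendsto (fun n => (f n).m3 / (1 - (f n).mean))
      (atTop ⊓ 𝓟 {n | (f n).mean < 1}) (nhds 0))
    (A : ℕ → ℕ) (hAtop : Tendsto A atTop atTop)
    (hAn : Tendsto (fun n : ℕ => (n : ℝ) * ∏ j ∈ Finset.Icc 1 (A n), (f j).mean) atTop (nhds 1))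
    (ε m : ℝ) (hε : 0 < ε) (hεm : ε ≤ m) :
    Tendsto (fun n : ℕ =>
        (∏ j ∈ Finset.Icc 1 (A ⌊(n : ℝ) * m⌋₊), (f j).mean)
          / (1 - iterComp f 0 (A ⌊(n : ℝ) * ε⌋₊) 0))
      atTop (nhds ((2 + ν) / 2 * (ε / m))) := by
  have hm : 0 < m := hε.trans_le hεm
  have hprod : ∀ N, ∏ j ∈ Icc 1 N, (f j).mean = prodIoc (fun j => (f j).mean) 0 N :=
    fun N => by rw [← zero_add 1, Icc_add_one_left_eq_Ioc, prodIoc]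
  have hT := (tendsto_prodIoc_div_one_sub_iterComp hν hmean_sum hm2_sum hm3_sum hmean_pos
    hmean_ne hC1a hC1b hC1c hC2a hC2b hC3a).comp (hAtop.comp (tendsto_natFloor_mul_atTop hε))
  simp only [hprod] at hAn
  have hlim := (((hAn.comp (tendsto_natFloor_mul_atTop hm)).div
    (hAn.comp (tendsto_natFloor_mul_atTop hε)) one_ne_zero).mul
      (tendsto_natFloor_mul_div_natFloor_mul hε hm)).mul hT
  rw [show 1 / 1 * (ε / m) * (1 + ν / 2) = (2 + ν) / 2 * (ε / m) by ring] at hlim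
  refine hlim.congr' ?_
  filter_upwards [(tendsto_natFloor_mul_atTop hε).eventually_gt_atTop 0,
    (tendsto_natFloor_mul_atTop hm).eventually_gt_atTop 0] with n hnε hnm
  have := (iterComp_zero_mem_Ico f hmean_pos (A ⌊(n : ℝ) * ε⌋₊).zero_le).2
  have := prodIoc_pos hmean_pos 0 (A ⌊(n : ℝ) * ε⌋₊)
  have : (0 : ℝ) < ⌊(n : ℝ) * ε⌋₊ := Nat.cast_pos.2 hnε
  have : (0 : ℝ) < ⌊(n : ℝ) * m⌋₊ := Nat.cast_pos.2 hnm
  simp only [Function.comp_apply, Pi.div_apply, hprod]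
  field_simp

theorem stmt14 (f : ℕ → PGF) (ν : ℝ) (hν : 0 ≤ ν)
    (hmean_sum : ∀ n, Summable (fun k : ℕ => (k : ℝ) * (f n).p k))
    (hm2_sum : ∀ n, Summable (fun k : ℕ => (k : ℝ) * ((k : ℝ) - 1) * (f n).p k))
    (hm3_sum : ∀ n, Summable (fun k : ℕ => (k : ℝ) * ((k : ℝ) - 1) * ((k : ℝ) - 2) * (f n).p k))
    (hmean_pos : ∀ n, 0 < (f n).mean) (hmean_ne : ∀ n, (f n).mean ≠ 1)
    (hC1a : Tendsto (fun n => (f n).mean) atTop (nhds 1))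
    (hC1b : ¬ Summable (fun n => max (1 - (f n).mean) 0))
    (hC1c : Summable (fun n => max ((f n).mean - 1) 0))
    (hC2a : Tendsto (fun n => (f n).m2 / (1 - (f n).mean))
      (atTop ⊓ 𝓟 {n | (f n).mean < 1}) (nhds ν))
    (hC2b : ∃ C, ∀ n, (f n).m2 / |1 - (f n).mean| ≤ C)
    (hC3a : 0 < ν → Tendsto (fun n => (f n).m3 / (1 - (f n).mean))
      (atTop ⊓ 𝓟 {n | (f n).mean < 1}) (nhds 0))
    (hC3b : 0 < ν → ∃ C, ∀ n, (f n).m3 / |1 - (f n).mean| ≤ C)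
    (A : ℕ → ℕ) (hA : Monotone A) (hAtop : Tendsto A atTop atTop)
    (hAn : Tendsto (fun n : ℕ => (n : ℝ) * ∏ j ∈ Finset.Icc 1 (A n), (f j).mean) atTop (nhds 1))
    (ε m : ℝ) (hε : 0 < ε) (hεm : ε ≤ m) :
    Tendsto (fun n : ℕ =>
        (∏ j ∈ Finset.Icc 1 (A ⌊(n : ℝ) * m⌋₊), (f j).mean)
          / (1 - iterComp f 0 (A ⌊(n : ℝ) * ε⌋₊) 0))
      atTop (nhds ((2 + ν) / 2 * (ε / m))) :=
  stmt14_general f ν hν hmean_sum hm2_sum hm3_sum hmean_pos hmean_ne hC1a hC1b hC1c hC2a hC2b hC3a A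
    hAtop hAn ε m hε hεm
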